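/- Let M ≥ 1 be a natural number, let v_1, …, v_M be real numbers with v_m ≥ 1 for every m, let H be a real number with H ≥ v_m for every m, and let ε be a real number with 0 < ε ≤ 1/(H²·M³). Then ε · ∑_{m=1}^{M} v_m ≥ 1 − ∏_{m=1}^{M} (1 − ε·v_m) > ε · ((∑_{m=1}^{M} v_m) − 1). -/
import Mathlib

lemma prod_one_sub_ge (s : Finset ℕ) (x : ℕ → ℝ)
    (hx : ∀ i ∈ s, 0 ≤ x i ∧ x i ≤ 1) :
    1 - ∑ i ∈ s, x i ≤ ∏ i ∈ s, (1 - x i) := by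
  induction s using Finset.cons_induction with
  | empty => simp
  | cons a s ha ih =>
    have hxa := hx a (Finset.mem_cons_self a s)
    have ih' := ih (fun i hi => hx i (Finset.mem_cons_of_mem hi))
    rw [Finset.prod_cons, Finset.sum_cons]
    have hs : 0 ≤ ∑ i ∈ s, x i :=
      Finset.sum_nonneg fun i hi => (hx i (Finset.mem_cons_of_mem hi)).1
    nlinarith [mul_le_mul_of_nonneg_left ih' (by linarith [hxa.2] : (0:ℝ) ≤ 1 - x a)]

lemma prod_one_sub_le (s : Finset ℕ) (x : ℕ → ℝ)
    (hx : ∀ i ∈ s, 0 ≤ x i ∧ x i ≤ 1) :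
    ∏ i ∈ s, (1 - x i) ≤ 1 - (∑ i ∈ s, x i) + (∑ i ∈ s, x i) ^ 2 / 2 := by
  induction s using Finset.cons_induction with
  | empty => simp
  | cons a s ha ih =>
    have hxa := hx a (Finset.mem_cons_self a s)
    have ih' := ih (fun i hi => hx i (Finset.mem_cons_of_mem hi))
    rw [Finset.prod_cons, Finset.sum_cons]
    have hs : 0 ≤ ∑ i ∈ s, x i :=
      Finset.sum_nonneg fun i hi => (hx i (Finset.mem_cons_of_mem hi)).1
    nlinarith [mul_le_mul_of_nonneg_left ih' (by linarith [hxa.2] : (0:ℝ) ≤ 1 - x a),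
      sq_nonneg (∑ i ∈ s, x i), sq_nonneg (∑ i ∈ s, x i - 1)]

/-- Two-sided bound on the success probability:
`ε ∑ v_m ≥ 1 - ∏ (1 - ε v_m) > ε ((∑ v_m) - 1)` for `0 < ε ≤ 1/(H² M³)`. -/
theorem two_sided_bound (M : ℕ) (hM : 1 ≤ M) (v : ℕ → ℝ)
    (hv : ∀ m ∈ Finset.Icc 1 M, 1 ≤ v m) (H : ℝ)
    (hH : ∀ m ∈ Finset.Icc 1 M, v m ≤ H) (ε : ℝ)
    (hε0 : 0 < ε) (hε : ε ≤ 1 / (H ^ 2 * (M : ℝ) ^ 3)) :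
    ε * ∑ m ∈ Finset.Icc 1 M, v m ≥ 1 - ∏ m ∈ Finset.Icc 1 M, (1 - ε * v m) ∧
      1 - ∏ m ∈ Finset.Icc 1 M, (1 - ε * v m) >
        ε * ((∑ m ∈ Finset.Icc 1 M, v m) - 1) := by
  have hM1 : (1:ℝ) ≤ (M:ℝ) := by exact_mod_cast hM
  have hH1 : (1:ℝ) ≤ H := le_trans (hv 1 (by simp [hM])) (hH 1 (by simp [hM]))
  have hden : (0:ℝ) < H ^ 2 * (M:ℝ) ^ 3 := by positivity
  have hεH : ε * (H ^ 2 * (M:ℝ) ^ 3) ≤ 1 := by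
    rw [le_div_iff₀ hden] at hε; linarith
  -- each x_m = ε v_m is in [0,1]
  have hx : ∀ i ∈ Finset.Icc 1 M, 0 ≤ ε * v i ∧ ε * v i ≤ 1 := by
    intro i hi
    have h1 := hv i hi
    have h2 := hH i hi
    constructor
    · positivity
    · have hM3 : (1:ℝ) ≤ (M:ℝ) ^ 3 := one_le_pow₀ hM1
      have hHM : (1:ℝ) ≤ H * (M:ℝ) ^ 3 := by nlinarith
      have hεH1 : ε * H ≤ 1 := by
        nlinarith [mul_le_mul_of_nonneg_left hHM (show (0:ℝ) ≤ ε * H by positivity)]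
      nlinarith
  have hsum : ∑ m ∈ Finset.Icc 1 M, ε * v m = ε * ∑ m ∈ Finset.Icc 1 M, v m := by
    rw [Finset.mul_sum]
  have hcard : (Finset.Icc 1 M).card = M := by simp
  have hvsum_le : ∑ m ∈ Finset.Icc 1 M, v m ≤ (M:ℝ) * H := by
    calc ∑ m ∈ Finset.Icc 1 M, v m ≤ (Finset.Icc 1 M).card • H :=
          Finset.sum_le_card_nsmul _ _ _ hH
      _ = (M:ℝ) * H := by rw [hcard]; simp [nsmul_eq_mul]
  have hvsum_nonneg : 0 ≤ ∑ m ∈ Finset.Icc 1 M, v m :=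
    Finset.sum_nonneg fun i hi => by linarith [hv i hi]
  have hupper := prod_one_sub_ge (Finset.Icc 1 M) (fun i => ε * v i) hx
  have hlower := prod_one_sub_le (Finset.Icc 1 M) (fun i => ε * v i) hx
  simp only [hsum] at hupper hlower
  constructor
  · linarith
  · -- (ε ∑v)^2 ≤ ε, hence S²/2 < ε
    have hS : ε * ∑ m ∈ Finset.Icc 1 M, v m ≤ ε * ((M:ℝ) * H) := by nlinarith
    have hS2 : (ε * ∑ m ∈ Finset.Icc 1 M, v m) ^ 2 ≤ ε := by
      have h1 : (ε * ∑ m ∈ Finset.Icc 1 M, v m) ^ 2 ≤ (ε * ((M:ℝ) * H)) ^ 2 := by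
        apply sq_le_sq' <;> nlinarith
      have h2 : (ε * ((M:ℝ) * H)) ^ 2 ≤ ε := by nlinarith [sq_nonneg H, sq_nonneg (M:ℝ)]
      linarith
    linarith
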